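/- Let T be a finitary monad on a locally finitely presentable category K. Then the Eilenberg–Moore category K^T is locally finitely presentable. -/

import Mathlib

/-!
Free algebras on a strong generator of finitely presentable objects of `K` form a strong generator
of `T.Algebra`: generation transfers along the free–forgetful adjunction because the forgetful
functor reflects isomorphisms, and finite presentability because the forgetful functor preserves
filtered colimits, `T` being finitary.

The real work is cocompleteness. Since every algebra is a reflexive coequalizer of free algebras,
the adjoint triangle theorem applied to the constant-diagram functor (Linton's argument) reduces it
to the existence of coequalizers. The coequalizer of `f g : A ⟶ B` is the colimit of an `ω`-chain
`B.A = X₀ → X₁ → ⋯` carrying partial actions `T Xₙ ⟶ Xₙ₊₁`: `X₁` is the coequalizer of `f.f`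
and `g.f` in `K`, and `Xₙ₊₂` is the quotient of `T Xₙ₊₁ ⨿ Xₙ₊₁` forcing the new partial action to
extend the old one and to satisfy the unit and associativity laws. As `T` preserves the colimit of
the chain, the partial actions assemble to an algebra structure on it, and that algebra is the
coequalizer.
-/

open CategoryTheory Limits Opposite

universe w w' v v₁ v₂ v₃ u u₁ u₂ u₃

namespace Formal

section Pullback

variable {A : Type u₁} {B : Type u₂} {K : Type u₃}
  [Category.{v₁} A] [Category.{v₂} B] [Category.{v₃} K]

/-- The strict pullback of two functors in the category of categories:
objects are pairs `(a, b)` with `U.obj a = V.obj b`. -/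
structure CatPullback (U : A ⥤ K) (V : B ⥤ K) : Type max u₁ u₂ where
  left : A
  right : B
  w : U.obj left = V.obj right

@[ext]
structure CatPullbackHom {U : A ⥤ K} {V : B ⥤ K} (X Y : CatPullback U V) where
  fl : X.left ⟶ Y.left
  fr : X.right ⟶ Y.right
  w : U.map fl ≫ eqToHom Y.w = eqToHom X.w ≫ V.map fr

instance (U : A ⥤ K) (V : B ⥤ K) : Category (CatPullback U V) where
  Hom := CatPullbackHom
  id X := ⟨𝟙 _, 𝟙 _, by simp⟩
  comp f g := ⟨f.fl ≫ g.fl, f.fr ≫ g.fr, by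
    rw [Functor.map_comp, Functor.map_comp, Category.assoc, g.w, ← Category.assoc, f.w,
      Category.assoc]⟩

/-- First projection of the pullback of categories. -/
def CatPullback.π₁ (U : A ⥤ K) (V : B ⥤ K) : CatPullback U V ⥤ A where
  obj X := X.left
  map f := f.fl

/-- Second projection of the pullback of categories. -/
def CatPullback.π₂ (U : A ⥤ K) (V : B ⥤ K) : CatPullback U V ⥤ B where
  obj X := X.right
  map f := f.fr

/-- The diagonal of the pullback square of categories. -/
def CatPullback.diag (U : A ⥤ K) (V : B ⥤ K) : CatPullback U V ⥤ K :=
  CatPullback.π₁ U V ⋙ U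

end Pullback

section LFP

variable {C : Type u} [Category.{v} C]

/-- An object is finitely presentable if its covariant hom-functor preserves
filtered colimits. -/
def FinitelyPresentable (X : C) : Prop :=
  PreservesFilteredColimitsOfSize.{v, v} (coyoneda.obj (op X))

/-- A category is locally finitely presentable if it is cocomplete and has a small
detecting (strong generating) set of finitely presentable objects. -/
def LocallyFinitelyPresentable (C : Type u) [Category.{v} C] : Prop :=
  HasColimitsOfSize.{v, v} C ∧
    ∃ S : Set C, Small.{v} S ∧ (∀ X ∈ S, FinitelyPresentable X) ∧ ObjectProperty.IsDetecting (fun X => X ∈ S)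

/-- A monad is finitary if its underlying endofunctor preserves filtered colimits. -/
def Monad.Finitary (T : CategoryTheory.Monad C) : Prop :=
  PreservesFilteredColimitsOfSize.{v, v} (T : C ⥤ C)

end LFP
section Cardinal

variable {C : Type u} [Category.{v} C] {D : Type u₁} [Category.{v₁} D]

/-- A category is `κ`-filtered if every diagram of size `< κ` admits a cocone. -/
def IsCardinalFiltered (J : Type u) [Category.{v} J] (κ : Cardinal.{w}) : Prop :=
  ∀ (D : Type w) [SmallCategory D], Cardinal.mk (Σ X Y : D, X ⟶ Y) < κ →
    ∀ F : D ⥤ J, Nonempty (Cocone F)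

/-- A functor preserves `κ`-filtered colimits. -/
def PreservesCardinalFilteredColimits (F : C ⥤ D) (κ : Cardinal.{w}) : Prop :=
  ∀ (J : Type w) [SmallCategory J], IsCardinalFiltered J κ → PreservesColimitsOfShape J F

/-- An object is `κ`-presentable if its hom-functor preserves `κ`-filtered colimits. -/
def CardinalPresentable (X : C) (κ : Cardinal.{v}) : Prop :=
  PreservesCardinalFilteredColimits (coyoneda.obj (op X)) κ

/-- A category is locally `κ`-presentable if it is cocomplete and has a small detecting
(strong generating) set of `κ`-presentable objects. -/
def LocallyCardinalPresentable (C : Type u) [Category.{v} C] (κ : Cardinal.{v}) : Prop :=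
  HasColimitsOfSize.{v, v} C ∧
    ∃ S : Set C, Small.{v} S ∧ (∀ X ∈ S, CardinalPresentable X κ) ∧ ObjectProperty.IsDetecting (fun X => X ∈ S)

/-- A category is locally presentable if it is locally `κ`-presentable for some
regular cardinal `κ`. -/
def LocallyPresentable (C : Type u) [Category.{v} C] : Prop :=
  ∃ κ : Cardinal.{v}, κ.IsRegular ∧ LocallyCardinalPresentable C κ

end Cardinal

section Coequalizer

def coconeOfSequence {C : Type*} [Category C] {F : ℕ ⥤ C} {P : C} (ι : ∀ n, F.obj n ⟶ P)
    (h : ∀ n, F.map (homOfLE (Nat.le_add_right n 1)) ≫ ι (n + 1) = ι n) : Cocone F where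
  pt := P
  ι := NatTrans.ofSequence ι fun n => by simpa using h n

variable {K : Type u} [Category.{v} K] {T : CategoryTheory.Monad K}

structure AlgebraChain (T : CategoryTheory.Monad K) where
  X : ℕ → K
  q (n : ℕ) : X n ⟶ X (n + 1)
  t (n : ℕ) : T.obj (X n) ⟶ X (n + 1)
  map_q_comp_t (n : ℕ) : T.map (q n) ≫ t (n + 1) = t n ≫ q (n + 1)
  η_comp_t (n : ℕ) : T.η.app (X n) ≫ t n = q n
  μ_comp_t_comp_q (n : ℕ) : T.μ.app (X n) ≫ t n ≫ q (n + 1) = T.map (t n) ≫ t (n + 1)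

namespace AlgebraChain

variable (c : AlgebraChain T)

def diagram : ℕ ⥤ K := Functor.ofSequence c.q

lemma diagram_map_homOfLE_succ (n : ℕ) :
    c.diagram.map (homOfLE (Nat.le_add_right n 1)) = c.q n :=
  Functor.ofSequence_map_homOfLE_succ c.q n

variable [HasColimitsOfShape ℕ K]

noncomputable def ι (n : ℕ) : c.X n ⟶ colimit c.diagram := colimit.ι c.diagram n

lemma q_comp_ι (n : ℕ) : c.q n ≫ c.ι (n + 1) = c.ι n :=
  c.diagram_map_homOfLE_succ n ▸ colimit.w c.diagram (homOfLE (Nat.le_add_right n 1))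

lemma hom_ext {W : K} {u v : colimit c.diagram ⟶ W} (h : ∀ n, c.ι n ≫ u = c.ι n ≫ v) :
    u = v :=
  colimit.hom_ext h

noncomputable def desc {W : K} (u : ∀ n, c.X n ⟶ W) (hu : ∀ n, c.q n ≫ u (n + 1) = u n) :
    colimit c.diagram ⟶ W :=
  colimit.desc c.diagram (coconeOfSequence u fun n => by
    rw [diagram_map_homOfLE_succ]
    exact hu n)

lemma ι_desc {W : K} (u : ∀ n, c.X n ⟶ W) (hu : ∀ n, c.q n ≫ u (n + 1) = u n) (n : ℕ) :
    c.ι n ≫ c.desc u hu = u n :=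
  colimit.ι_desc _ n

variable [PreservesColimitsOfShape ℕ (T : K ⥤ K)]

lemma map_hom_ext {W : K} {u v : T.obj (colimit c.diagram) ⟶ W}
    (h : ∀ n, T.map (c.ι n) ≫ u = T.map (c.ι n) ≫ v) : u = v :=
  (isColimitOfPreserves (T : K ⥤ K) (colimit.isColimit c.diagram)).hom_ext h

lemma map_map_hom_ext {W : K} {u v : T.obj (T.obj (colimit c.diagram)) ⟶ W}
    (h : ∀ n, T.map (T.map (c.ι n)) ≫ u = T.map (T.map (c.ι n)) ≫ v) : u = v :=
  (isColimitOfPreserves (T : K ⥤ K)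
    (isColimitOfPreserves (T : K ⥤ K) (colimit.isColimit c.diagram))).hom_ext h

noncomputable def action : T.obj (colimit c.diagram) ⟶ colimit c.diagram :=
  (isColimitOfPreserves (T : K ⥤ K) (colimit.isColimit c.diagram)).desc
    (coconeOfSequence (fun n => c.t n ≫ c.ι (n + 1)) fun n => by
      rw [Functor.comp_map, diagram_map_homOfLE_succ]
      exact (reassoc_of% (c.map_q_comp_t n)) _ |>.trans (c.t n ≫= c.q_comp_ι (n + 1)))

lemma map_ι_comp_action (n : ℕ) : T.map (c.ι n) ≫ c.action = c.t n ≫ c.ι (n + 1) :=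
  (isColimitOfPreserves (T : K ⥤ K) (colimit.isColimit c.diagram)).fac _ n

noncomputable abbrev algebra : T.Algebra where
  A := colimit c.diagram
  a := c.action
  unit := c.hom_ext fun n => by
    rw [T.unit_naturality_assoc, map_ι_comp_action, reassoc_of% c.η_comp_t,
      q_comp_ι, Category.comp_id]
  assoc := c.map_map_hom_ext fun n => by
    rw [T.mu_naturality_assoc, map_ι_comp_action, ← Functor.map_comp_assoc,
      map_ι_comp_action, Functor.map_comp_assoc, map_ι_comp_action,
      ← c.q_comp_ι (n + 1), reassoc_of% c.μ_comp_t_comp_q]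

variable {D : T.Algebra}

noncomputable def algebraDesc (u : ∀ n, c.X n ⟶ D.A) (hq : ∀ n, c.q n ≫ u (n + 1) = u n)
    (ht : ∀ n, c.t n ≫ u (n + 1) = T.map (u n) ≫ D.a) : c.algebra ⟶ D where
  f := c.desc u hq
  h := c.map_hom_ext fun n => by
    change T.map (c.ι n) ≫ T.map (c.desc u hq) ≫ D.a =
      T.map (c.ι n) ≫ c.action ≫ c.desc u hq
    rw [← Functor.map_comp_assoc, ι_desc, reassoc_of% c.map_ι_comp_action, ι_desc, ht]

lemma ι_algebraDesc (u : ∀ n, c.X n ⟶ D.A) (hq : ∀ n, c.q n ≫ u (n + 1) = u n)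
    (ht : ∀ n, c.t n ≫ u (n + 1) = T.map (u n) ≫ D.a) (n : ℕ) :
    c.ι n ≫ (c.algebraDesc u hq ht).f = u n :=
  c.ι_desc u hq n

lemma t_comp_ι_comp_hom (m : c.algebra ⟶ D) (n : ℕ) :
    c.t n ≫ c.ι (n + 1) ≫ m.f = T.map (c.ι n ≫ m.f) ≫ D.a := by
  rw [Functor.map_comp_assoc, m.h, ← reassoc_of% c.map_ι_comp_action]

lemma algebra_hom_ext {m m' : c.algebra ⟶ D} (h : ∀ n, c.ι n ≫ m.f = c.ι n ≫ m'.f) :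
    m = m' :=
  Monad.Algebra.Hom.ext (c.hom_ext h)

end AlgebraChain

structure CoequalizerStage (T : CategoryTheory.Monad K) where
  X : K
  Y : K
  q : X ⟶ Y
  t : T.obj X ⟶ Y

namespace CoequalizerStage

variable [HasBinaryCoproducts K] [HasCoequalizers K] (s : CoequalizerStage T)

/- The next stage is `T Y ⨿ Y` modulo the relations identifying `relLeft` with `relRight`; their
three components say that the new partial action extends `t` along `q` and satisfies the unit
and the associativity law. -/
noncomputable def relLeft : T.obj s.X ⨿ (s.Y ⨿ T.obj (T.obj s.X)) ⟶ T.obj s.Y ⨿ s.Y :=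
  coprod.desc (T.map s.q ≫ coprod.inl)
    (coprod.desc coprod.inr (T.μ.app s.X ≫ s.t ≫ coprod.inr))

noncomputable def relRight : T.obj s.X ⨿ (s.Y ⨿ T.obj (T.obj s.X)) ⟶ T.obj s.Y ⨿ s.Y :=
  coprod.desc (s.t ≫ coprod.inr)
    (coprod.desc (T.η.app s.Y ≫ coprod.inl) (T.map s.t ≫ coprod.inl))

noncomputable abbrev next : CoequalizerStage T where
  X := s.Y
  Y := coequalizer s.relLeft s.relRight
  q := coprod.inr ≫ coequalizer.π _ _
  t := coprod.inl ≫ coequalizer.π _ _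

lemma map_q_comp_next_t : T.map s.q ≫ s.next.t = s.t ≫ s.next.q := by
  simpa [relLeft, relRight, coprod.inl_desc, coprod.inl_desc_assoc] using
    coprod.inl ≫= coequalizer.condition s.relLeft s.relRight

lemma η_comp_next_t : T.η.app s.Y ≫ s.next.t = s.next.q := by
  simpa [relLeft, relRight, coprod.inl_desc, coprod.inr_desc, coprod.inl_desc_assoc,
    coprod.inr_desc_assoc] using
    ((coprod.inl ≫ coprod.inr) ≫= coequalizer.condition s.relLeft s.relRight).symm

lemma μ_comp_t_comp_next_q : T.μ.app s.X ≫ s.t ≫ s.next.q = T.map s.t ≫ s.next.t := by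
  simpa [relLeft, relRight, coprod.inr_desc, coprod.inr_desc_assoc] using
    (coprod.inr ≫ coprod.inr) ≫= coequalizer.condition s.relLeft s.relRight

lemma next_hom_ext {W : K} {u v : s.next.Y ⟶ W} (hq : s.next.q ≫ u = s.next.q ≫ v)
    (ht : s.next.t ≫ u = s.next.t ≫ v) : u = v :=
  coequalizer.hom_ext (coprod.hom_ext (by simpa using ht) (by simpa using hq))

variable {D : T.Algebra}

noncomputable def nextDesc (u : s.Y ⟶ D.A) (hu : s.t ≫ u = T.map (s.q ≫ u) ≫ D.a) :
    s.next.Y ⟶ D.A :=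
  coequalizer.desc (coprod.desc (T.map u ≫ D.a) u) (by
    ext
    · simp [relLeft, relRight, hu, coprod.inl_desc, coprod.inr_desc]
    · simp [relLeft, relRight, coprod.inl_desc, coprod.inr_desc, ← T.η.naturality_assoc,
        Monad.Algebra.unit]
    · simp only [relLeft, relRight, coprod.inr_desc, coprod.inl_desc, coprod.desc_comp,
        Category.assoc]
      calc T.μ.app s.X ≫ s.t ≫ u = T.μ.app s.X ≫ T.map (s.q ≫ u) ≫ D.a := by rw [hu]
        _ = T.map (T.map (s.q ≫ u)) ≫ T.μ.app D.A ≫ D.a := (T.μ.naturality_assoc _ _).symm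
        _ = T.map (s.t ≫ u) ≫ D.a := by rw [D.assoc, hu, Functor.map_comp_assoc]
        _ = T.map s.t ≫ T.map u ≫ D.a := Functor.map_comp_assoc _ _ _ _)

lemma next_q_nextDesc (u : s.Y ⟶ D.A) (hu : s.t ≫ u = T.map (s.q ≫ u) ≫ D.a) :
    s.next.q ≫ s.nextDesc u hu = u := by
  simp [nextDesc, coprod.inr_desc]

lemma next_t_nextDesc (u : s.Y ⟶ D.A) (hu : s.t ≫ u = T.map (s.q ≫ u) ≫ D.a) :
    s.next.t ≫ s.nextDesc u hu = T.map u ≫ D.a := by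
  simp [nextDesc, coprod.inl_desc]

end CoequalizerStage

namespace AlgebraCoequalizer

variable [HasBinaryCoproducts K] [HasCoequalizers K] {A B : T.Algebra} (f g : A ⟶ B)

noncomputable abbrev stage : ℕ → CoequalizerStage T
  | 0 => ⟨B.A, coequalizer f.f g.f, coequalizer.π f.f g.f, B.a ≫ coequalizer.π f.f g.f⟩
  | n + 1 => (stage n).next

noncomputable abbrev chain : AlgebraChain T where
  X n := (stage f g n).X
  q n := (stage f g n).q
  t n := (stage f g n).t
  map_q_comp_t n := (stage f g n).map_q_comp_next_t
  η_comp_t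
    | 0 => B.unit_assoc _
    | n + 1 => (stage f g n).η_comp_next_t
  μ_comp_t_comp_q n := (stage f g n).μ_comp_t_comp_next_q

lemma chain_hom_ext : ∀ (n : ℕ) {W : K} {u v : (chain f g).X (n + 1) ⟶ W},
    (chain f g).q n ≫ u = (chain f g).q n ≫ v →
      (chain f g).t n ≫ u = (chain f g).t n ≫ v → u = v
  | 0, _, _, _, hq, _ => coequalizer.hom_ext hq
  | n + 1, _, _, _, hq, ht => (stage f g n).next_hom_ext hq ht

lemma chain_t_zero : (chain f g).t 0 = B.a ≫ (chain f g).q 0 := rfl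

variable {D : T.Algebra} (h : B ⟶ D) (w : f.f ≫ h.f = g.f ≫ h.f)

noncomputable def stageDesc : ∀ n, {u : (chain f g).X (n + 1) ⟶ D.A //
    (chain f g).t n ≫ u = T.map ((chain f g).q n ≫ u) ≫ D.a}
  | 0 => ⟨coequalizer.desc h.f w, by
      change (B.a ≫ coequalizer.π f.f g.f) ≫ coequalizer.desc h.f _ =
        T.map (coequalizer.π f.f g.f ≫ coequalizer.desc h.f _) ≫ D.a
      rw [Category.assoc, coequalizer.π_desc, h.h]⟩
  | n + 1 => ⟨(stage f g n).nextDesc (stageDesc n).1 (stageDesc n).2, by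
      rw [(stage f g n).next_t_nextDesc, (stage f g n).next_q_nextDesc]⟩

lemma q_comp_stageDesc (n : ℕ) :
    (chain f g).q (n + 1) ≫ (stageDesc f g h w (n + 1)).1 = (stageDesc f g h w n).1 :=
  (stage f g n).next_q_nextDesc (stageDesc f g h w n).1 (stageDesc f g h w n).2

variable [HasColimitsOfShape ℕ K] [PreservesColimitsOfShape ℕ (T : K ⥤ K)]

noncomputable def π : B ⟶ (chain f g).algebra where
  f := (chain f g).ι 0
  h := by
    change T.map ((chain f g).ι 0) ≫ (chain f g).action = B.a ≫ (chain f g).ι 0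
    rw [(chain f g).map_ι_comp_action, chain_t_zero, Category.assoc, (chain f g).q_comp_ι]

lemma condition : f ≫ π f g = g ≫ π f g :=
  Monad.Algebra.Hom.ext <| by
    change f.f ≫ (chain f g).ι 0 = g.f ≫ (chain f g).ι 0
    rw [← (chain f g).q_comp_ι 0]
    exact coequalizer.condition_assoc _ _ _

noncomputable def desc : (chain f g).algebra ⟶ D :=
  (chain f g).algebraDesc (fun n => (chain f g).q n ≫ (stageDesc f g h w n).1)
    (fun n => by rw [q_comp_stageDesc])
    (fun n => by rw [q_comp_stageDesc]; exact (stageDesc f g h w n).2)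

lemma ι_desc (n : ℕ) :
    (chain f g).ι n ≫ (desc f g h w).f = (chain f g).q n ≫ (stageDesc f g h w n).1 :=
  (chain f g).ι_algebraDesc _ _ _ n

lemma π_comp_desc : π f g ≫ desc f g h w = h :=
  Monad.Algebra.Hom.ext <| (ι_desc f g h w 0).trans (coequalizer.π_desc _ _)

lemma desc_unique (m : (chain f g).algebra ⟶ D) (hm : π f g ≫ m = h) : m = desc f g h w := by
  have key : ∀ n, (chain f g).ι n ≫ m.f = (chain f g).q n ≫ (stageDesc f g h w n).1 := by
    intro n
    induction n with
    | zero => exact (congrArg Monad.Algebra.Hom.f hm).trans (coequalizer.π_desc _ _).symm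
    | succ n ih =>
      apply chain_hom_ext f g n
      · rw [reassoc_of% (chain f g).q_comp_ι, ih, q_comp_stageDesc]
      · rw [(chain f g).t_comp_ι_comp_hom, ih, q_comp_stageDesc, ← (stageDesc f g h w n).2]
  exact (chain f g).algebra_hom_ext fun n => (key n).trans (ι_desc f g h w n).symm

noncomputable def isColimit : IsColimit (Cofork.ofπ (π f g) (condition f g)) :=
  Cofork.IsColimit.mk' _ fun s =>
    ⟨desc f g s.π (congrArg Monad.Algebra.Hom.f s.condition), π_comp_desc f g _ _,
      fun {m} hm => desc_unique f g _ _ m hm⟩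

end AlgebraCoequalizer

theorem hasCoequalizers_algebra [HasBinaryCoproducts K] [HasCoequalizers K]
    [HasColimitsOfShape ℕ K] [PreservesColimitsOfShape ℕ (T : K ⥤ K)] :
    HasCoequalizers T.Algebra :=
  have : ∀ {X Y : T.Algebra} {f g : X ⟶ Y}, HasColimit (parallelPair f g) := fun {_ _ f g} =>
    ⟨⟨⟨_, AlgebraCoequalizer.isColimit f g⟩⟩⟩
  hasCoequalizers_of_hasColimit_parallelPair _

end Coequalizer

section Linton

variable {K : Type u} [Category.{v} K] {T : CategoryTheory.Monad K}
  {J : Type w} [Category.{w'} J]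

def beckπ (X : J ⥤ T.Algebra) : X ⋙ T.forget ⋙ T.free ⟶ X where
  app j := Monad.FreeCoequalizer.π (X.obj j)
  naturality _ _ φ := Monad.Algebra.Hom.ext (X.map φ).h

noncomputable def regularEpiBeckπ (X : J ⥤ T.Algebra) : RegularEpi (beckπ X) where
  W := ((X ⋙ T.forget) ⋙ (T : K ⥤ K)) ⋙ T.free
  left := Functor.whiskerRight Monad.ForgetCreatesColimits.γ T.free
  right :=
    { app j := Monad.FreeCoequalizer.bottomMap (X.obj j)
      naturality _ _ φ := Monad.Algebra.Hom.ext (T.μ.naturality (X.map φ).f) }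
  w := NatTrans.ext (funext fun j => Monad.FreeCoequalizer.condition (X.obj j))
  isColimit := evaluationJointlyReflectsColimits _ fun j =>
    (isColimitMapCoconeCoforkEquiv _ _).symm (Monad.beckAlgebraCoequalizer (X.obj j))

lemma whiskerRight_adj_counit_app (X : J ⥤ T.Algebra) :
    ((Monad.adj T).whiskerRight J).counit.app X = beckπ X := by
  ext
  simp [beckπ]
  rfl

theorem hasColimitsOfShape_algebra [HasColimitsOfShape J K]
    [HasReflexiveCoequalizers T.Algebra] : HasColimitsOfShape J T.Algebra := by
  have : (Functor.const J : K ⥤ _).IsRightAdjoint :=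
    hasColimitsOfShape_iff_isRightAdjoint_const.mp inferInstance
  have : ((Functor.const J : T.Algebra ⥤ _) ⋙
      (Functor.whiskeringRight J _ _).obj T.forget).IsRightAdjoint :=
    (inferInstance : (T.forget ⋙ Functor.const J).IsRightAdjoint)
  exact hasColimitsOfShape_iff_isRightAdjoint_const.mpr <|
    isRightAdjoint_triangle_lift _ ((Monad.adj T).whiskerRight J) fun X =>
      whiskerRight_adj_counit_app X ▸ regularEpiBeckπ X

end Linton

section Presentability

lemma finitelyPresentable_obj_of_adjunction {C : Type u} [Category.{v} C] {D : Type u₁}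
    [Category.{v} D] {F : C ⥤ D} {G : D ⥤ C} (adj : F ⊣ G)
    [PreservesFilteredColimitsOfSize.{v, v} G] {X : C} (hX : FinitelyPresentable X) :
    FinitelyPresentable (F.obj X) := by
  have : PreservesFilteredColimitsOfSize.{v, v} (coyoneda.obj (op X)) := hX
  have e : G ⋙ coyoneda.obj (op X) ≅ coyoneda.obj (op (F.obj X)) :=
    (adj.compCoyonedaIso.app (op X)).symm
  exact ⟨fun J _ _ => preservesColimitsOfShape_of_natIso e⟩

lemma isDetecting_image_of_adjunction {C : Type u} [Category.{v} C] {D : Type u₁}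
    [Category.{v₁} D] {F : C ⥤ D} {G : D ⥤ C} (adj : F ⊣ G) [G.ReflectsIsomorphisms]
    {S : Set C} (hS : ObjectProperty.IsDetecting (· ∈ S)) :
    ObjectProperty.IsDetecting (· ∈ F.obj '' S) := by
  intro Y Z φ hφ
  suffices IsIso (G.map φ) from isIso_of_reflects_iso φ G
  refine hS _ fun X hX g => ?_
  obtain ⟨l, hl, hl'⟩ := hφ (F.obj X) ⟨X, hX, rfl⟩ ((adj.homEquiv X Z).symm g)
  refine ⟨adj.homEquiv X Y l, ?_, fun l' hl'' => ?_⟩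
  · dsimp only
    rw [← adj.homEquiv_naturality_right, hl, Equiv.apply_symm_apply]
  · rw [← Equiv.symm_apply_eq]
    exact hl' _ (by dsimp only at hl'' ⊢; rw [← adj.homEquiv_naturality_right_symm, hl''])

end Presentability

section Algebras

variable {K : Type u} [Category.{v} K] {T : CategoryTheory.Monad K}

lemma preservesFilteredColimits_forget [HasColimitsOfSize.{v, v} K] (hT : Monad.Finitary T) :
    PreservesFilteredColimitsOfSize.{v, v} T.forget := by
  have : PreservesFilteredColimitsOfSize.{v, v} (T : K ⥤ K) := hT
  exact ⟨fun J _ _ => inferInstance⟩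

lemma hasColimitsOfSize_algebra [HasColimitsOfSize.{v, v} K] (hT : Monad.Finitary T) :
    HasColimitsOfSize.{v, v} T.Algebra := by
  -- the chains of the coequalizer construction are indexed by `ℕ : Type`
  have : PreservesFilteredColimitsOfSize.{0, 0} (T : K ⥤ K) :=
    have : PreservesFilteredColimitsOfSize.{v, v} (T : K ⥤ K) := hT
    preservesSmallestFilteredColimits_of_preservesFilteredColimits _
  have : HasCoequalizers T.Algebra := hasCoequalizers_algebra
  exact ⟨fun J _ => hasColimitsOfShape_algebra⟩

end Algebras

/-- The Eilenberg–Moore category of a finitary monad on a locally finitely presentable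
category is locally finitely presentable. -/
theorem stmt4 {K : Type u} [Category.{v} K] (h : LocallyFinitelyPresentable K)
    (T : CategoryTheory.Monad K) (hT : Monad.Finitary T) :
    LocallyFinitelyPresentable T.Algebra := by
  obtain ⟨hK, S, hS, hSfp, hSdet⟩ := h
  have := preservesFilteredColimits_forget hT
  refine ⟨hasColimitsOfSize_algebra hT, T.free.obj '' S, inferInstance, ?_,
    isDetecting_image_of_adjunction T.adj hSdet⟩
  rintro _ ⟨X, hX, rfl⟩
  exact finitelyPresentable_obj_of_adjunction T.adj (hSfp X hX)

end Formal
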